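/- arXiv:2402.17027 — 4 statements merged into one kernel-verified Lean document; each statement's English description precedes it below -/
import Mathlib

section
/- Seed mutation is an involution on clusters: if (X,B) is a seed with cluster X = (x_1,...,x_n) in a field of rational functions and x'_k = (∏_{b_jk>0} x_j^{b_jk} + ∏_{b_jk<0} x_j^{-b_jk}) / x_k is the mutated variable, then mutating the new cluster (with matrix μ_k(B)) at k again recovers x_k. -/
/-- Fomin–Zelevinsky matrix mutation at index `k`. -/
def mutate {n : ℕ} (k : Fin n) (B : Matrix (Fin n) (Fin n) ℤ) : Matrix (Fin n) (Fin n) ℤ :=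
  Matrix.of fun i j =>
    if i = k ∨ j = k then -B i j
    else B i j + Int.sign (B i k) * max 0 (B i k * B k j)

/-- `B` is skew-symmetrizable: there is a positive diagonal `d` with `dᵢ bᵢⱼ = -dⱼ bⱼᵢ`. -/
def IsSkewSymmetrizable {n : ℕ} (B : Matrix (Fin n) (Fin n) ℤ) : Prop :=
  ∃ d : Fin n → ℤ, (∀ i, 0 < d i) ∧ ∀ i j, d i * B i j = -(d j * B j i)

/-- The exchange relation: the new cluster variable obtained by mutating the
cluster `x` with exchange matrix `B` at index `k`. -/
noncomputable def exch {n : ℕ} {F : Type*} [Field F] (B : Matrix (Fin n) (Fin n) ℤ)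
    (k : Fin n) (x : Fin n → F) : F :=
  ((∏ j, x j ^ (B j k).toNat) + ∏ j, x j ^ (-B j k).toNat) / x k

/-- Seed mutation at index `k`: exchange relation on the cluster, matrix mutation on `B`. -/
noncomputable def seedMut {n : ℕ} {F : Type*} [Field F] (k : Fin n)
    (s : (Fin n → F) × Matrix (Fin n) (Fin n) ℤ) :
    (Fin n → F) × Matrix (Fin n) (Fin n) ℤ :=
  (Function.update s.1 k (exch s.2 k s.1), mutate k s.2)

/-- Action of a mutation sequence (list in order of application, leftmost first). -/
noncomputable def seqAct {n : ℕ} {F : Type*} [Field F] (l : List (Fin n))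
    (s : (Fin n → F) × Matrix (Fin n) (Fin n) ℤ) :
    (Fin n → F) × Matrix (Fin n) (Fin n) ℤ :=
  l.foldl (fun t k => seedMut k t) s

/-- Seed mutation is an involution on clusters: mutating at `k` and then mutating
the new cluster (with matrix `μ_k(B)`) at `k` again recovers `x k`. -/
theorem exch_involutive {n : ℕ} {K F : Type*} [Field K] [CharZero K] [Field F] [Algebra K F]
    (B : Matrix (Fin n) (Fin n) ℤ) (hB : IsSkewSymmetrizable B)
    (x : Fin n → F) (hx : AlgebraicIndependent K x) (k : Fin n) :
    exch (mutate k B) k (Function.update x k (exch B k x)) = x k := by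
  obtain ⟨d, hd, hskew⟩ := hB
  have hkk : B k k = 0 := by
    have h := hskew k k
    have h2 : d k * B k k = 0 := by linarith
    have := (hd k).ne'
    rcases mul_eq_zero.1 h2 with h | h
    · exact absurd h this
    · exact h
  set M := ∏ j, x j ^ (B j k).toNat with hM
  set P := ∏ j, x j ^ (-B j k).toNat with hP
  have hxk : x k ≠ 0 := by
    intro h
    have : (MvPolynomial.X k : MvPolynomial (Fin n) K) = 0 := by
      apply hx
      simp [h]
    exact MvPolynomial.X_ne_zero k this
  have hMP : M + P ≠ 0 := by
    set p : MvPolynomial (Fin n) K :=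
      (∏ j, MvPolynomial.X j ^ (B j k).toNat) + ∏ j, MvPolynomial.X j ^ (-B j k).toNat with hp
    have hval : (MvPolynomial.aeval x) p = M + P := by
      simp [hp, hM, hP]
    have hpne : p ≠ 0 := by
      intro h
      have := congrArg (MvPolynomial.eval (fun _ => (1 : K))) h
      simp [hp] at this
    intro h
    apply hpne
    apply hx
    rw [hval, h, map_zero]
  have hupd : ∀ j, j ≠ k → Function.update x k (exch B k x) j = x j := by
    intro j hj; simp [Function.update_of_ne hj]
  have hcolk : ∀ j, (mutate k B) j k = -B j k := by
    intro j; simp [mutate]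
  have hprod1 : (∏ j, Function.update x k (exch B k x) j ^ ((mutate k B) j k).toNat) = P := by
    rw [hP]
    apply Finset.prod_congr rfl
    intro j _
    by_cases hj : j = k
    · subst hj; simp [hcolk, hkk]
    · rw [hupd j hj, hcolk]
  have hprod2 : (∏ j, Function.update x k (exch B k x) j ^ (-(mutate k B) j k).toNat) = M := by
    rw [hM]
    apply Finset.prod_congr rfl
    intro j _
    by_cases hj : j = k
    · subst hj; simp [hcolk, hkk]
    · rw [hupd j hj, hcolk, neg_neg]
  have hxk' : Function.update x k (exch B k x) k = (M + P) / x k := by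
    simp [Function.update_self, exch, hM, hP]
  rw [exch, hprod1, hprod2, hxk', add_comm P M]
  field_simp
end

section
/- The mutated cluster variable x'_k obtained from an algebraically independent family (x_1,...,x_n) by the exchange relation is nonzero, and the new cluster (x_1,...,x'_k,...,x_n) is again algebraically independent over K. -/
/-!
Skew-symmetrizability forces `b_kk = 0`, so the numerator `P` of the exchange relation lies in the
algebra `A` generated over `K` by the `x_j` with `j ≠ k`; it is nonzero because it is the value of
a sum of two monomials, a nonzero polynomial in characteristic zero. Algebraic independence of
`(x_1, …, x_n)` says exactly that the `x_j` with `j ≠ k` are independent and `x_k` is transcendental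
over `A`; then so is `P / x_k`, since an algebraic relation for it over `A` yields one for `x_k⁻¹`,
hence for `x_k`.
-/

open MvPolynomial Set Algebra

lemma IsSkewSymmetrizable.apply_self_eq_zero {n : ℕ} {B : Matrix (Fin n) (Fin n) ℤ}
    (hB : IsSkewSymmetrizable B) (k : Fin n) : B k k = 0 := by
  obtain ⟨d, hd, hskew⟩ := hB
  have : d k * B k k = 0 := by linarith [hskew k k]
  exact (mul_eq_zero.mp this).resolve_left (hd k).ne'

theorem Transcendental.algebraMap_div {S L : Type*} [CommRing S] [Field L] [Algebra S L]
    {t : L} (ht : Transcendental S t) {c : S} (hc : c ∈ nonZeroDivisors S) :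
    Transcendental S (algebraMap S L c / t) := by
  rw [div_eq_mul_inv, ← Algebra.smul_def]
  exact fun h => ht (IsAlgebraic.inv_iff.mp (h.of_smul hc))

theorem algebraicIndependent_update_iff {ι R A : Type*} [DecidableEq ι] [CommRing R]
    [CommRing A] [Algebra R A] {x : ι → A} {i : ι} {a : A} :
    AlgebraicIndependent R (Function.update x i a) ↔
      AlgebraicIndepOn R x {i}ᶜ ∧ Transcendental (adjoin R (x '' {i}ᶜ)) a := by
  have heq : EqOn (Function.update x i a) x {i}ᶜ := fun j hj => Function.update_of_ne hj _ _
  have huniv : insert i {i}ᶜ = univ := by ext j; simpa using em (j = i)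
  rw [← AlgebraicIndepOn.univ, ← huniv,
    AlgebraicIndepOn.insert_iff (s := {i}ᶜ) (by simp), heq.image_eq, Function.update_self]
  have hrestrict : (fun j : ({i}ᶜ : Set ι) => Function.update x i a j) =
      fun j : ({i}ᶜ : Set ι) => x j := funext fun j => heq j.2
  rw [AlgebraicIndepOn, hrestrict, AlgebraicIndepOn]

theorem AlgebraicIndependent.prod_pow_add_prod_pow_ne_zero {ι K A : Type*} [Fintype ι]
    [CommRing K] [CharZero K] [CommRing A] [Algebra K A] {x : ι → A}
    (hx : AlgebraicIndependent K x) (e f : ι → ℕ) :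
    (∏ j, x j ^ e j) + ∏ j, x j ^ f j ≠ 0 := by
  classical
  let u := Finsupp.equivFunOnFinite.symm e
  let v := Finsupp.equivFunOnFinite.symm f
  have hp : (monomial u (1 : K) + monomial v 1) ≠ 0 := fun h => by
    have := congrArg (coeff u) h
    simp only [coeff_add, coeff_monomial, coeff_zero, if_true] at this
    split_ifs at this <;> norm_num at this
  have haeval := hx.eq_zero_of_aeval_eq_zero _ |>.mt hp
  simpa [aeval_monomial, Finsupp.prod_fintype, u, v] using haeval

theorem prod_pow_mem_adjoin_image_compl {ι R A : Type*} [Fintype ι] [CommRing R] [CommRing A]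
    [Algebra R A] (x : ι → A) {i : ι} (e : ι → ℕ) (he : e i = 0) :
    ∏ j, x j ^ e j ∈ adjoin R (x '' {i}ᶜ) := by
  refine Subalgebra.prod_mem _ fun j _ => ?_
  by_cases hj : j = i
  · simp [hj, he]
  · exact Subalgebra.pow_mem _ (subset_adjoin (mem_image_of_mem x hj)) _

/-- The mutated cluster variable is nonzero, and the mutated cluster is again
algebraically independent over `K`. -/
theorem exch_ne_zero_and_algIndep {n : ℕ} {K F : Type*} [Field K] [CharZero K] [Field F]
    [Algebra K F] (B : Matrix (Fin n) (Fin n) ℤ) (hB : IsSkewSymmetrizable B)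
    (x : Fin n → F) (hx : AlgebraicIndependent K x) (k : Fin n) :
    exch B k x ≠ 0 ∧ AlgebraicIndependent K (Function.update x k (exch B k x)) := by
  have hBkk := hB.apply_self_eq_zero k
  have hnum : (∏ j, x j ^ (B j k).toNat) + ∏ j, x j ^ (-B j k).toNat ∈ adjoin K (x '' {k}ᶜ) :=
    Subalgebra.add_mem _ (prod_pow_mem_adjoin_image_compl x _ (by simp [hBkk]))
      (prod_pow_mem_adjoin_image_compl x _ (by simp [hBkk]))
  have hnum0 := hx.prod_pow_add_prod_pow_ne_zero (fun j => (B j k).toNat) (fun j => (-B j k).toNat)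
  obtain ⟨hcompl, hxk⟩ := (algebraicIndependent_update_iff (a := x k)).mp
    (by rwa [Function.update_eq_self])
  refine ⟨div_ne_zero hnum0 (hx.ne_zero k), algebraicIndependent_update_iff.mpr ⟨hcompl, ?_⟩⟩
  exact hxk.algebraMap_div (c := ⟨_, hnum⟩)
    (mem_nonZeroDivisors_of_ne_zero (Subtype.coe_ne_coe.mp hnum0))
end

section
/- For the quiver ·_1 → ·_2 (type A_2), the rooted mutation group is the group of order 2 generated by μ_{[12]} = μ_1 μ_2 μ_1 μ_2 μ_1, and μ_{[12]} and μ_{[21]} = μ_2 μ_1 μ_2 μ_1 μ_2 act identically on every seed of this cluster pattern. -/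
/-- The relabelling action of a permutation on seeds. -/
def permSeed {n : ℕ} {F : Type*} [Field F] (σ : Equiv.Perm (Fin n))
    (s : (Fin n → F) × Matrix (Fin n) (Fin n) ℤ) :
    (Fin n → F) × Matrix (Fin n) (Fin n) ℤ :=
  (fun i => s.1 (σ.symm i), Matrix.of fun i j => s.2 (σ.symm i) (σ.symm j))

/-!
In rank two every mutation merely negates a skew-symmetrizable exchange matrix, so along any
mutation sequence the matrix stays `±[[0, 1], [-1, 0]]` and the exchange relations read
`x₁ x₁' = 1 + x₂`, `x₂ x₂' = 1 + x₁`. Starting from a cluster `(u, v)` they run through the five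
cluster variables `u, v, (1 + v) / u, (1 + u + v) / (u v), (1 + u) / v`, so five alternating
mutations, in either order, lead to `(v, u)` with the matrix negated. Algebraic independence of
the initial cluster ensures that no denominator met along any mutation sequence vanishes.
-/

lemma IsSkewSymmetrizable.diag_eq_zero {n : ℕ} {B : Matrix (Fin n) (Fin n) ℤ}
    (hB : IsSkewSymmetrizable B) (i : Fin n) : B i i = 0 := by
  obtain ⟨d, hd, hdB⟩ := hB
  have : d i * B i i = 0 := by linarith [hdB i i]
  exact (mul_eq_zero.1 this).resolve_left (hd i).ne'

lemma IsSkewSymmetrizable.mul_swap_nonpos {n : ℕ} {B : Matrix (Fin n) (Fin n) ℤ}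
    (hB : IsSkewSymmetrizable B) (i j : Fin n) : B i j * B j i ≤ 0 := by
  obtain ⟨d, hd, hdB⟩ := hB
  have hdij : 0 < d i * d j := mul_pos (hd i) (hd j)
  have : d i * d j * (B i j * B j i) = -(d j * B j i) ^ 2 := by
    linear_combination (d j * B j i) * hdB i j
  nlinarith [sq_nonneg (d j * B j i)]

lemma IsSkewSymmetrizable.neg {n : ℕ} {B : Matrix (Fin n) (Fin n) ℤ}
    (hB : IsSkewSymmetrizable B) : IsSkewSymmetrizable (-B) := by
  obtain ⟨d, hd, hdB⟩ := hB
  exact ⟨d, hd, fun i j => by simp only [Matrix.neg_apply, mul_neg, hdB i j]⟩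

lemma mutate_eq_neg_of_fin_two {B : Matrix (Fin 2) (Fin 2) ℤ} (hB : IsSkewSymmetrizable B)
    (k : Fin 2) : mutate k B = -B := by
  ext i j
  by_cases h : i = k ∨ j = k
  · simp [mutate, h]
  · obtain rfl : i = j := by omega
    simp [mutate, hB.diag_eq_zero, max_eq_left (hB.mul_swap_nonpos i k)]

def a2Matrix : Matrix (Fin 2) (Fin 2) ℤ := !![0, 1; -1, 0]

def IsA2Matrix (B : Matrix (Fin 2) (Fin 2) ℤ) : Prop := B = a2Matrix ∨ B = -a2Matrix

lemma IsA2Matrix.neg {B : Matrix (Fin 2) (Fin 2) ℤ} (hB : IsA2Matrix B) : IsA2Matrix (-B) := by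
  rcases hB with rfl | rfl
  · exact Or.inr rfl
  · exact Or.inl (neg_neg _)

lemma IsA2Matrix.isSkewSymmetrizable {B : Matrix (Fin 2) (Fin 2) ℤ} (hB : IsA2Matrix B) :
    IsSkewSymmetrizable B := by
  have ha2 : IsSkewSymmetrizable a2Matrix :=
    ⟨1, fun _ => one_pos, fun i j => by fin_cases i <;> fin_cases j <;> rfl⟩
  rcases hB with rfl | rfl
  exacts [ha2, ha2.neg]

lemma seqAct_append {n : ℕ} {F : Type*} [Field F] (l l' : List (Fin n))
    (s : (Fin n → F) × Matrix (Fin n) (Fin n) ℤ) : seqAct (l ++ l') s = seqAct l' (seqAct l s) :=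
  List.foldl_append ..

section Field

variable {F : Type*} [Field F] {B : Matrix (Fin 2) (Fin 2) ℤ}

lemma seedMut_zero (hB : IsA2Matrix B) (u v : F) :
    seedMut 0 (![u, v], B) = (![(1 + v) / u, v], -B) := by
  have hexch : exch B 0 ![u, v] = (1 + v) / u := by
    rcases hB with rfl | rfl <;> simp [exch, Fin.prod_univ_two, a2Matrix, add_comm]
  ext i
  · fin_cases i <;> simp [seedMut, hexch]
  · simp [seedMut, mutate_eq_neg_of_fin_two hB.isSkewSymmetrizable]

lemma seedMut_one (hB : IsA2Matrix B) (u v : F) :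
    seedMut 1 (![u, v], B) = (![u, (1 + u) / v], -B) := by
  have hexch : exch B 1 ![u, v] = (1 + u) / v := by
    rcases hB with rfl | rfl <;> simp [exch, Fin.prod_univ_two, a2Matrix, add_comm]
  ext i
  · fin_cases i <;> simp [seedMut, hexch]
  · simp [seedMut, mutate_eq_neg_of_fin_two hB.isSkewSymmetrizable]

/-- The points `(u, v)` at which no numerator or denominator of the five `A₂` cluster variables
`u, v, (1 + v) / u, (1 + u + v) / (u * v), (1 + u) / v` vanishes. -/
structure A2Generic (u v : F) : Prop where
  left_ne_zero : u ≠ 0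
  right_ne_zero : v ≠ 0
  one_add_left_ne_zero : 1 + u ≠ 0
  one_add_right_ne_zero : 1 + v ≠ 0
  one_add_add_ne_zero : 1 + u + v ≠ 0

lemma A2Generic.swap {u v : F} (h : A2Generic u v) : A2Generic v u :=
  ⟨h.2, h.1, h.4, h.3, by rw [add_right_comm]; exact h.5⟩

lemma A2Generic.mutate_left {u v : F} (h : A2Generic u v) : A2Generic ((1 + v) / u) v := by
  obtain ⟨hu, hv, hu1, hv1, huv⟩ := h
  refine ⟨div_ne_zero hv1 hu, hv, ?_, hv1, ?_⟩
  · rw [show 1 + (1 + v) / u = (1 + u + v) / u by field_simp; ring]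
    exact div_ne_zero huv hu
  · rw [show 1 + (1 + v) / u + v = (1 + u) * (1 + v) / u by field_simp; ring]
    exact div_ne_zero (mul_ne_zero hu1 hv1) hu

lemma A2Generic.mutate_right {u v : F} (h : A2Generic u v) : A2Generic u ((1 + u) / v) :=
  h.swap.mutate_left.swap

lemma A2Generic.of_algebraicIndependent {R : Type*} [CommRing R] [Nontrivial R] [Algebra R F]
    {x : Fin 2 → F} (hx : AlgebraicIndependent R x) : A2Generic (x 0) (x 1) := by
  have aeval_ne_zero (p : MvPolynomial (Fin 2) R) (hp : MvPolynomial.constantCoeff p = 1) :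
      MvPolynomial.aeval x p ≠ 0 := fun h => by
    simp [hx.eq_zero_of_aeval_eq_zero p h] at hp
  refine ⟨hx.ne_zero 0, hx.ne_zero 1, ?_, ?_, ?_⟩
  · simpa using aeval_ne_zero (1 + .X 0) (by simp)
  · simpa using aeval_ne_zero (1 + .X 1) (by simp)
  · simpa using aeval_ne_zero (1 + .X 0 + .X 1) (by simp)

lemma seqAct_pentagon_zero (hB : IsA2Matrix B) {u v : F} (h : A2Generic u v) :
    seqAct [0, 1, 0, 1, 0] (![u, v], B) = (![v, u], -B) := by
  obtain ⟨hu, hv, hu1, hv1, huv⟩ := h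
  have e1 : (1 + (1 + v) / u) / v = (1 + u + v) / (u * v) := by field_simp; ring
  have e2 : (1 + (1 + u + v) / (u * v)) / ((1 + v) / u) = (1 + u) / v := by field_simp; ring
  have e3 : (1 + (1 + u) / v) / ((1 + u + v) / (u * v)) = u := by field_simp; ring
  have e4 : (1 + u) / ((1 + u) / v) = v := by field_simp
  simp only [seqAct, List.foldl_cons, List.foldl_nil, seedMut_zero, seedMut_one, hB, hB.neg,
    neg_neg, e1, e2, e3, e4]

lemma seqAct_pentagon_one (hB : IsA2Matrix B) {u v : F} (h : A2Generic u v) :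
    seqAct [1, 0, 1, 0, 1] (![u, v], B) = (![v, u], -B) := by
  obtain ⟨hu, hv, hu1, hv1, huv⟩ := h
  have e1 : (1 + (1 + u) / v) / u = (1 + u + v) / (u * v) := by field_simp; ring
  have e2 : (1 + (1 + u + v) / (u * v)) / ((1 + u) / v) = (1 + v) / u := by field_simp; ring
  have e3 : (1 + (1 + v) / u) / ((1 + u + v) / (u * v)) = v := by field_simp; ring
  have e4 : (1 + v) / ((1 + v) / u) = u := by field_simp
  simp only [seqAct, List.foldl_cons, List.foldl_nil, seedMut_zero, seedMut_one, hB, hB.neg,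
    neg_neg, e1, e2, e3, e4]

def IsGenericA2Seed (s : (Fin 2 → F) × Matrix (Fin 2) (Fin 2) ℤ) : Prop :=
  ∃ u v B, s = (![u, v], B) ∧ IsA2Matrix B ∧ A2Generic u v

namespace IsGenericA2Seed

variable {s : (Fin 2 → F) × Matrix (Fin 2) (Fin 2) ℤ}

lemma seedMut (hs : IsGenericA2Seed s) (k : Fin 2) : IsGenericA2Seed (seedMut k s) := by
  obtain ⟨u, v, B, rfl, hB, h⟩ := hs
  obtain rfl | rfl : k = 0 ∨ k = 1 := by omega
  · exact ⟨_, _, _, seedMut_zero hB u v, hB.neg, h.mutate_left⟩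
  · exact ⟨_, _, _, seedMut_one hB u v, hB.neg, h.mutate_right⟩

lemma seqAct (hs : IsGenericA2Seed s) (l : List (Fin 2)) : IsGenericA2Seed (seqAct l s) := by
  induction l generalizing s with
  | nil => exact hs
  | cons k l ih => exact ih (hs.seedMut k)

lemma seqAct_pentagon_zero_eq_one (hs : IsGenericA2Seed s) :
    _root_.seqAct [0, 1, 0, 1, 0] s = _root_.seqAct [1, 0, 1, 0, 1] s := by
  obtain ⟨u, v, B, rfl, hB, h⟩ := hs
  rw [seqAct_pentagon_zero hB h, seqAct_pentagon_one hB h]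

end IsGenericA2Seed

lemma permSeed_swap_a2Matrix (u v : F) :
    permSeed (Equiv.swap 0 1) (![u, v], a2Matrix) = (![v, u], -a2Matrix) := by
  ext i j <;> fin_cases i
  all_goals try fin_cases j
  all_goals rfl

end Field

/-- For the quiver `·₁ → ·₂` (type `A₂`), the rooted mutation group is the group of
order two generated by `μ_{[12]} = μ₁μ₂μ₁μ₂μ₁`: this element squares to the
identity on the initial seed, acts nontrivially (by the transposition of the two
indices) on the initial seed, and agrees with `μ_{[21]} = μ₂μ₁μ₂μ₁μ₂` on every
seed of the cluster pattern. -/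
theorem a2_rooted_mutation_group {F : Type*} [Field F] [Algebra ℚ F]
    (x : Fin 2 → F) (hx : AlgebraicIndependent ℚ x) :
    let s₀ : (Fin 2 → F) × Matrix (Fin 2) (Fin 2) ℤ := (x, !![0, 1; -1, 0])
    let l12 : List (Fin 2) := [0, 1, 0, 1, 0]
    let l21 : List (Fin 2) := [1, 0, 1, 0, 1]
    seqAct (l12 ++ l12) s₀ = s₀ ∧
      seqAct l12 s₀ = permSeed (Equiv.swap 0 1) s₀ ∧
      seqAct l12 s₀ ≠ s₀ ∧
      ∀ l : List (Fin 2), seqAct l12 (seqAct l s₀) = seqAct l21 (seqAct l s₀) := by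
  intro s₀ l12 l21
  have hgen := A2Generic.of_algebraicIndependent hx
  have hs₀ : s₀ = (![x 0, x 1], a2Matrix) := by
    ext i
    · fin_cases i <;> rfl
    · rfl
  have h12 : seqAct l12 s₀ = (![x 1, x 0], -a2Matrix) := by
    rw [hs₀, seqAct_pentagon_zero (Or.inl rfl) hgen]
  refine ⟨?_, ?_, ?_, fun l => ?_⟩
  · rw [seqAct_append, h12, seqAct_pentagon_zero (Or.inr rfl) hgen.swap, neg_neg, hs₀]
  · rw [h12, hs₀, permSeed_swap_a2Matrix]
  · rw [h12, hs₀]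
    intro h
    simpa [a2Matrix] using congrArg (fun s => s.2 0 1) h
  · exact (IsGenericA2Seed.seqAct ⟨_, _, _, hs₀, Or.inl rfl, hgen⟩ l).seqAct_pentagon_zero_eq_one
end

section
/- For a 2×2 skew-symmetrizable matrix B = [[0,b],[-c,0]] with b,c > 0, the mutation class of B (under μ_1, μ_2) is finite if and only if bc ≤ 3, and the associated cluster pattern has finitely many seeds if and only if bc ≤ 3. -/
/-!
Starting from `(x, B)` and mutating alternately at `0, 1, 0, …`, the `n`-th seed is
`(z n, z (n+1))` (in some order) with matrix `±B`, where `z (n+2) * z n = z (n+1) ^ e n + 1` and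
the exponents `e n` alternate between `c` and `b`; the other mutation of the `(n+1)`-st seed is the
inverse step, back to the `n`-th. Every `z n` is a quotient of two polynomials in `x 0, x 1` that
are positive at `(1, 1)`, so by algebraic independence no `z n` vanishes.

If `bc ≤ 3`, the explicit Laurent expressions of `z 2, z 3, …` show that `z` is periodic (with
period 5, 6 or 8), so the seeds form a finite cycle. If `bc ≥ 4`, the degree in `x 1` of `z n`
(numerator minus denominator) satisfies `w (n+2) = e n * w (n+1) - w n`, and since
`w (n+4) = (bc - 2) w (n+2) - w n` with `bc - 2 ≥ 2`, it strictly increases along odd indices; hence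
the `z (2m+1)` are pairwise distinct.
-/

section RankTwo

variable {F : Type*} [Field F]

section Mutation

lemma exch_neg {n : ℕ} (B : Matrix (Fin n) (Fin n) ℤ) (k : Fin n) (v : Fin n → F) :
    exch (-B) k v = exch B k v := by
  simp [exch, add_comm]

lemma exch_zero (b c : ℕ) (v : Fin 2 → F) :
    exch !![0, (b : ℤ); -(c : ℤ), 0] 0 v = (v 1 ^ c + 1) / v 0 := by
  simp [exch, Fin.prod_univ_two, add_comm]

lemma exch_one (b c : ℕ) (v : Fin 2 → F) :
    exch !![0, (b : ℤ); -(c : ℤ), 0] 1 v = (v 0 ^ b + 1) / v 1 := by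
  simp [exch, Fin.prod_univ_two]

lemma mutate_rank2 {b c : ℤ} (h : 0 ≤ b * c) (k : Fin 2) :
    mutate k !![0, b; -c, 0] = -!![0, b; -c, 0] := by
  ext i j
  fin_cases k <;> fin_cases i <;> fin_cases j <;> simp [mutate, h, mul_comm c b]

lemma mutate_neg_rank2 {b c : ℤ} (h : 0 ≤ b * c) (k : Fin 2) :
    mutate k (-!![0, b; -c, 0]) = !![0, b; -c, 0] := by
  ext i j
  fin_cases k <;> fin_cases i <;> fin_cases j <;> simp [mutate, h, mul_comm c b]

lemma seqAct_concat {n : ℕ} (l : List (Fin n)) (k : Fin n)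
    (s : (Fin n → F) × Matrix (Fin n) (Fin n) ℤ) :
    seqAct (l ++ [k]) s = seedMut k (seqAct l s) :=
  List.foldl_concat ..

lemma seqAct_mem_of_forall_seedMut_mem {n : ℕ}
    {S : Set ((Fin n → F) × Matrix (Fin n) (Fin n) ℤ)} (hS : ∀ s ∈ S, ∀ k, seedMut k s ∈ S)
    (l : List (Fin n)) : ∀ s ∈ S, seqAct l s ∈ S := by
  induction l with
  | nil => exact fun s hs => hs
  | cons k l ih => exact fun s hs => ih _ (hS s hs k)

lemma finite_clusterVariables_of_finite_seeds {n : ℕ}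
    (s : (Fin n → F) × Matrix (Fin n) (Fin n) ℤ)
    (h : {t | ∃ l : List (Fin n), seqAct l s = t}.Finite) :
    {y : F | ∃ (l : List (Fin n)) (i : Fin n), (seqAct l s).1 i = y}.Finite := by
  refine ((h.prod (Set.finite_univ (α := Fin n))).image fun p => p.1.1 p.2).subset ?_
  rintro _ ⟨l, i, rfl⟩
  exact ⟨(seqAct l s, i), ⟨⟨l, rfl⟩, trivial⟩, rfl⟩

end Mutation

section ClusterSeq

noncomputable def clusterSeq (e : ℕ → ℕ) (u v : F) : ℕ → F
  | 0 => u
  | 1 => v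
  | n + 2 => (clusterSeq e u v (n + 1) ^ e n + 1) / clusterSeq e u v n

@[simp]
lemma clusterSeq_zero (e : ℕ → ℕ) (u v : F) : clusterSeq e u v 0 = u := rfl

@[simp]
lemma clusterSeq_one (e : ℕ → ℕ) (u v : F) : clusterSeq e u v 1 = v := rfl

lemma clusterSeq_add_two (e : ℕ → ℕ) (u v : F) (n : ℕ) :
    clusterSeq e u v (n + 2) = (clusterSeq e u v (n + 1) ^ e n + 1) / clusterSeq e u v n :=
  rfl

lemma clusterSeq_add_two_eq_iff {e : ℕ → ℕ} {u v : F} {n : ℕ} (hn : clusterSeq e u v n ≠ 0)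
    {w : F} :
    clusterSeq e u v (n + 2) = w ↔ clusterSeq e u v (n + 1) ^ e n + 1 = w * clusterSeq e u v n := by
  rw [clusterSeq_add_two, div_eq_iff hn]

lemma clusterSeq_add_two_inv (e : ℕ → ℕ) (u v : F) (n : ℕ) (h : clusterSeq e u v (n + 2) ≠ 0) :
    (clusterSeq e u v (n + 1) ^ e n + 1) / clusterSeq e u v (n + 2) = clusterSeq e u v n := by
  rw [clusterSeq_add_two] at h ⊢
  exact div_div_cancel₀ (div_ne_zero_iff.1 h).1

lemma clusterSeq_periodic {e : ℕ → ℕ} {h : ℕ} (he : Function.Periodic e h) {u v : F}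
    (h₀ : clusterSeq e u v h = u) (h₁ : clusterSeq e u v (h + 1) = v) :
    Function.Periodic (clusterSeq e u v) h := by
  suffices ∀ n, clusterSeq e u v (n + h) = clusterSeq e u v n ∧
      clusterSeq e u v (n + 1 + h) = clusterSeq e u v (n + 1) from fun n => (this n).1
  intro n
  induction n with
  | zero => simpa [add_comm 1 h] using ⟨h₀, h₁⟩
  | succ n ih =>
    refine ⟨ih.2, ?_⟩
    rw [show n + 1 + 1 + h = n + h + 2 by omega, clusterSeq_add_two, he n,
      show n + h + 1 = n + 1 + h by omega, ih.2, ih.1, ← clusterSeq_add_two]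

def altExp (b c : ℕ) (n : ℕ) : ℕ := if Even n then c else b

lemma altExp_periodic (b c : ℕ) : Function.Periodic (altExp b c) 2 := by
  intro n
  simp [altExp, Nat.even_add]

lemma altExp_mul_altExp_succ (b c n : ℕ) : altExp b c n * altExp b c (n + 1) = b * c := by
  rcases Nat.even_or_odd n with hn | hn
  · simp [altExp, hn, Nat.even_add_one, mul_comm]
  · simp [altExp, Nat.not_even_iff_odd.2 hn, hn.add_one]

end ClusterSeq

section Seeds

variable (b c : ℕ) (u v : F)

noncomputable def clusterSeed (n : ℕ) : (Fin 2 → F) × Matrix (Fin 2) (Fin 2) ℤ :=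
  if Even n then (![clusterSeq (altExp b c) u v n, clusterSeq (altExp b c) u v (n + 1)],
      !![0, (b : ℤ); -(c : ℤ), 0])
  else (![clusterSeq (altExp b c) u v (n + 1), clusterSeq (altExp b c) u v n],
      -!![0, (b : ℤ); -(c : ℤ), 0])

def mutationIndex (n : ℕ) : Fin 2 := if Even n then 0 else 1

lemma seedMut_clusterSeed (n : ℕ) :
    seedMut (mutationIndex n) (clusterSeed b c u v n) = clusterSeed b c u v (n + 1) := by
  have hbc : (0 : ℤ) ≤ b * c := by positivity
  rcases Nat.even_or_odd n with hn | hn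
  · have hn' : ¬Even (n + 1) := by simpa [Nat.even_add_one] using hn
    simp only [clusterSeed, mutationIndex, seedMut, hn, hn', mutate_rank2 hbc, exch_zero,
      if_true, if_false]
    congr 1
    ext i
    fin_cases i <;> simp [clusterSeq_add_two, altExp, hn]
  · have hn' : ¬Even n := Nat.not_even_iff_odd.2 hn
    simp only [clusterSeed, mutationIndex, seedMut, hn', hn.add_one, mutate_neg_rank2 hbc,
      exch_neg, exch_one, if_true, if_false]
    congr 1
    ext i
    fin_cases i <;> simp [clusterSeq_add_two, altExp, hn']

lemma seedMut_clusterSeed_succ (n : ℕ) (h : clusterSeq (altExp b c) u v (n + 2) ≠ 0) :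
    seedMut (mutationIndex n) (clusterSeed b c u v (n + 1)) = clusterSeed b c u v n := by
  have hbc : (0 : ℤ) ≤ b * c := by positivity
  have key := clusterSeq_add_two_inv _ u v n h
  rcases Nat.even_or_odd n with hn | hn
  · have hn' : ¬Even (n + 1) := by simpa [Nat.even_add_one] using hn
    simp only [altExp, hn, if_true] at key
    simp only [clusterSeed, mutationIndex, seedMut, hn, hn', mutate_neg_rank2 hbc, exch_neg,
      exch_zero, if_true, if_false]
    congr 1
    ext i
    fin_cases i <;> simp [key]
  · have hn' : ¬Even n := Nat.not_even_iff_odd.2 hn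
    simp only [altExp, hn', if_false] at key
    simp only [clusterSeed, mutationIndex, seedMut, hn', hn.add_one, mutate_rank2 hbc,
      exch_one, if_true, if_false]
    congr 1
    ext i
    fin_cases i <;> simp [key]

lemma eq_mutationIndex_succ_or_eq_mutationIndex (k : Fin 2) (m : ℕ) :
    k = mutationIndex (m + 1) ∨ k = mutationIndex m := by
  rcases Nat.even_or_odd m with hm | hm <;>
    fin_cases k <;> simp [mutationIndex, hm, Nat.not_even_iff_odd.2]

lemma seedMut_clusterSeed_mem_range (hz : ∀ n, clusterSeq (altExp b c) u v n ≠ 0) (k : Fin 2)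
    (m : ℕ) : seedMut k (clusterSeed b c u v (m + 1)) ∈ Set.range (clusterSeed b c u v) := by
  rcases eq_mutationIndex_succ_or_eq_mutationIndex k m with rfl | rfl
  · exact ⟨m + 2, (seedMut_clusterSeed b c u v (m + 1)).symm⟩
  · exact ⟨m, (seedMut_clusterSeed_succ b c u v m (hz _)).symm⟩

lemma exists_seqAct_eq_clusterSeed :
    ∀ n, ∃ l, seqAct l (![u, v], !![0, (b : ℤ); -(c : ℤ), 0]) = clusterSeed b c u v n
  | 0 => ⟨[], by simp [clusterSeed, seqAct]⟩
  | n + 1 => by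
    obtain ⟨l, hl⟩ := exists_seqAct_eq_clusterSeed n
    exact ⟨l ++ [mutationIndex n], by rw [seqAct_concat, hl, seedMut_clusterSeed]⟩

lemma clusterSeed_fst_mutationIndex (n : ℕ) :
    (clusterSeed b c u v n).1 (mutationIndex n) = clusterSeq (altExp b c) u v n := by
  rcases Nat.even_or_odd n with hn | hn
  · simp [clusterSeed, mutationIndex, hn]
  · simp [clusterSeed, mutationIndex, Nat.not_even_iff_odd.2 hn]

lemma range_clusterSeq_subset :
    Set.range (clusterSeq (altExp b c) u v) ⊆ {y | ∃ (l : List (Fin 2)) (i : Fin 2),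
      (seqAct l (![u, v], !![0, (b : ℤ); -(c : ℤ), 0])).1 i = y} := by
  rintro _ ⟨n, rfl⟩
  obtain ⟨l, hl⟩ := exists_seqAct_eq_clusterSeed b c u v n
  exact ⟨l, mutationIndex n, by rw [hl, clusterSeed_fst_mutationIndex]⟩

lemma clusterSeed_periodic {h : ℕ} (hh : Even h)
    (hper : Function.Periodic (clusterSeq (altExp b c) u v) h) :
    Function.Periodic (clusterSeed b c u v) h := by
  intro n
  simp only [clusterSeed, Nat.even_add, hh, iff_true, hper n, add_right_comm n h 1, hper (n + 1)]

end Seeds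

section FiniteType

lemma Function.Periodic.finite_range {α : Type*} {f : ℕ → α} {h : ℕ}
    (hf : Function.Periodic f h) (h0 : 0 < h) : (Set.range f).Finite := by
  refine ((Set.finite_Iio h).image f).subset ?_
  rintro _ ⟨n, rfl⟩
  exact ⟨n % h, Nat.mod_lt n h0,
    by simpa [Nat.mod_add_div'] using (hf.nat_mul (n / h) (n % h)).symm⟩

lemma finite_seeds_of_periodic (b c : ℕ) (u v : F)
    (hz : ∀ n, clusterSeq (altExp b c) u v n ≠ 0) {h : ℕ} (hh : Even h) (h0 : 0 < h)
    (hper : Function.Periodic (clusterSeq (altExp b c) u v) h) :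
    {s | ∃ l : List (Fin 2), seqAct l (![u, v], !![0, (b : ℤ); -(c : ℤ), 0]) = s}.Finite := by
  have hseed := clusterSeed_periodic b c u v hh hper
  have hclosed : ∀ s ∈ Set.range (clusterSeed b c u v), ∀ k,
      seedMut k s ∈ Set.range (clusterSeed b c u v) := by
    rintro _ ⟨n, rfl⟩ k
    obtain ⟨m, hm⟩ : ∃ m, n + h = m + 1 := ⟨n + h - 1, by omega⟩
    rw [← hseed n, hm]
    exact seedMut_clusterSeed_mem_range b c u v hz k m
  have hstart : clusterSeed b c u v 0 = (![u, v], !![0, (b : ℤ); -(c : ℤ), 0]) := by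
    simp [clusterSeed]
  refine (hseed.finite_range h0).subset ?_
  rintro _ ⟨l, rfl⟩
  exact seqAct_mem_of_forall_seedMut_mem hclosed l _ ⟨0, hstart⟩

lemma clusterSeq_one_one_periodic (u v : F) (hz : ∀ n, clusterSeq (altExp 1 1) u v n ≠ 0) :
    Function.Periodic (clusterSeq (altExp 1 1) u v) 5 := by
  have hu : u ≠ 0 := hz 0
  have hv : v ≠ 0 := hz 1
  have h2 : clusterSeq (altExp 1 1) u v 2 = (v + 1) / u := by
    simp [clusterSeq_add_two, altExp]
  have h3 : clusterSeq (altExp 1 1) u v 3 = (u + v + 1) / (u * v) := by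
    rw [clusterSeq_add_two_eq_iff (hz 1), h2, clusterSeq_one, show altExp 1 1 1 = 1 from rfl]
    field_simp
    ring
  have h4 : clusterSeq (altExp 1 1) u v 4 = (u + 1) / v := by
    rw [clusterSeq_add_two_eq_iff (hz 2), h3, h2, show altExp 1 1 2 = 1 from rfl]
    field_simp
    ring
  have h5 : clusterSeq (altExp 1 1) u v 5 = u := by
    rw [clusterSeq_add_two_eq_iff (hz 3), h4, h3, show altExp 1 1 3 = 1 from rfl]
    field_simp
    ring
  have h6 : clusterSeq (altExp 1 1) u v 6 = v := by
    rw [clusterSeq_add_two_eq_iff (hz 4), h5, h4, show altExp 1 1 4 = 1 from rfl]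
    field_simp
  exact clusterSeq_periodic (fun n => by simp [altExp]) h5 h6

lemma clusterSeq_one_two_periodic (u v : F) (hz : ∀ n, clusterSeq (altExp 1 2) u v n ≠ 0) :
    Function.Periodic (clusterSeq (altExp 1 2) u v) 6 := by
  have hu : u ≠ 0 := hz 0
  have hv : v ≠ 0 := hz 1
  have h2 : clusterSeq (altExp 1 2) u v 2 = (v ^ 2 + 1) / u := by
    simp [clusterSeq_add_two, altExp]
  have h3 : clusterSeq (altExp 1 2) u v 3 = (u + v ^ 2 + 1) / (u * v) := by
    rw [clusterSeq_add_two_eq_iff (hz 1), h2, clusterSeq_one, show altExp 1 2 1 = 1 from rfl]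
    field_simp
    ring
  have h4 : clusterSeq (altExp 1 2) u v 4 = ((u + 1) ^ 2 + v ^ 2) / (u * v ^ 2) := by
    rw [clusterSeq_add_two_eq_iff (hz 2), h3, h2, show altExp 1 2 2 = 2 from rfl]
    field_simp
    ring
  have h5 : clusterSeq (altExp 1 2) u v 5 = (u + 1) / v := by
    rw [clusterSeq_add_two_eq_iff (hz 3), h4, h3, show altExp 1 2 3 = 1 from rfl]
    field_simp
    ring
  have h6 : clusterSeq (altExp 1 2) u v 6 = u := by
    rw [clusterSeq_add_two_eq_iff (hz 4), h5, h4, show altExp 1 2 4 = 2 from rfl]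
    field_simp
  have h7 : clusterSeq (altExp 1 2) u v 7 = v := by
    rw [clusterSeq_add_two_eq_iff (hz 5), h6, h5, show altExp 1 2 5 = 1 from rfl]
    field_simp
  exact clusterSeq_periodic ((altExp_periodic 1 2).nat_mul 3) h6 h7

lemma clusterSeq_two_one_periodic (u v : F) (hz : ∀ n, clusterSeq (altExp 2 1) u v n ≠ 0) :
    Function.Periodic (clusterSeq (altExp 2 1) u v) 6 := by
  have hu : u ≠ 0 := hz 0
  have hv : v ≠ 0 := hz 1
  have h2 : clusterSeq (altExp 2 1) u v 2 = (v + 1) / u := by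
    simp [clusterSeq_add_two, altExp]
  have h3 : clusterSeq (altExp 2 1) u v 3 = ((v + 1) ^ 2 + u ^ 2) / (u ^ 2 * v) := by
    rw [clusterSeq_add_two_eq_iff (hz 1), h2, clusterSeq_one, show altExp 2 1 1 = 2 from rfl]
    field_simp
  have h4 : clusterSeq (altExp 2 1) u v 4 = (u ^ 2 + v + 1) / (u * v) := by
    rw [clusterSeq_add_two_eq_iff (hz 2), h3, h2, show altExp 2 1 2 = 1 from rfl]
    field_simp
    ring
  have h5 : clusterSeq (altExp 2 1) u v 5 = (u ^ 2 + 1) / v := by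
    rw [clusterSeq_add_two_eq_iff (hz 3), h4, h3, show altExp 2 1 3 = 2 from rfl]
    field_simp
    ring
  have h6 : clusterSeq (altExp 2 1) u v 6 = u := by
    rw [clusterSeq_add_two_eq_iff (hz 4), h5, h4, show altExp 2 1 4 = 1 from rfl]
    field_simp
    ring
  have h7 : clusterSeq (altExp 2 1) u v 7 = v := by
    rw [clusterSeq_add_two_eq_iff (hz 5), h6, h5, show altExp 2 1 5 = 2 from rfl]
    field_simp
  exact clusterSeq_periodic ((altExp_periodic 2 1).nat_mul 3) h6 h7

lemma clusterSeq_one_three_periodic (u v : F) (hz : ∀ n, clusterSeq (altExp 1 3) u v n ≠ 0) :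
    Function.Periodic (clusterSeq (altExp 1 3) u v) 8 := by
  have hu : u ≠ 0 := hz 0
  have hv : v ≠ 0 := hz 1
  have h2 : clusterSeq (altExp 1 3) u v 2 = (v ^ 3 + 1) / u := by
    simp [clusterSeq_add_two, altExp]
  have h3 : clusterSeq (altExp 1 3) u v 3 = (u + v ^ 3 + 1) / (u * v) := by
    rw [clusterSeq_add_two_eq_iff (hz 1), h2, clusterSeq_one, show altExp 1 3 1 = 1 from rfl]
    field_simp
    ring
  have h4 : clusterSeq (altExp 1 3) u v 4 =
      ((u + 1) ^ 3 + (3 * u + 2) * v ^ 3 + v ^ 6) / (u ^ 2 * v ^ 3) := by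
    rw [clusterSeq_add_two_eq_iff (hz 2), h3, h2, show altExp 1 3 2 = 3 from rfl]
    field_simp
    ring
  have h5 : clusterSeq (altExp 1 3) u v 5 = ((u + 1) ^ 2 + v ^ 3) / (u * v ^ 2) := by
    rw [clusterSeq_add_two_eq_iff (hz 3), h4, h3, show altExp 1 3 3 = 1 from rfl]
    field_simp
    ring
  have h6 : clusterSeq (altExp 1 3) u v 6 = ((u + 1) ^ 3 + v ^ 3) / (u * v ^ 3) := by
    rw [clusterSeq_add_two_eq_iff (hz 4), h5, h4, show altExp 1 3 4 = 3 from rfl]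
    field_simp
    ring
  have h7 : clusterSeq (altExp 1 3) u v 7 = (u + 1) / v := by
    rw [clusterSeq_add_two_eq_iff (hz 5), h6, h5, show altExp 1 3 5 = 1 from rfl]
    field_simp
    ring
  have h8 : clusterSeq (altExp 1 3) u v 8 = u := by
    rw [clusterSeq_add_two_eq_iff (hz 6), h7, h6, show altExp 1 3 6 = 3 from rfl]
    field_simp
  have h9 : clusterSeq (altExp 1 3) u v 9 = v := by
    rw [clusterSeq_add_two_eq_iff (hz 7), h8, h7, show altExp 1 3 7 = 1 from rfl]
    field_simp
  exact clusterSeq_periodic ((altExp_periodic 1 3).nat_mul 4) h8 h9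

lemma clusterSeq_three_one_periodic (u v : F) (hz : ∀ n, clusterSeq (altExp 3 1) u v n ≠ 0) :
    Function.Periodic (clusterSeq (altExp 3 1) u v) 8 := by
  have hu : u ≠ 0 := hz 0
  have hv : v ≠ 0 := hz 1
  have h2 : clusterSeq (altExp 3 1) u v 2 = (v + 1) / u := by
    simp [clusterSeq_add_two, altExp]
  have h3 : clusterSeq (altExp 3 1) u v 3 = ((v + 1) ^ 3 + u ^ 3) / (u ^ 3 * v) := by
    rw [clusterSeq_add_two_eq_iff (hz 1), h2, clusterSeq_one, show altExp 3 1 1 = 3 from rfl]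
    field_simp
  have h4 : clusterSeq (altExp 3 1) u v 4 = ((v + 1) ^ 2 + u ^ 3) / (u ^ 2 * v) := by
    rw [clusterSeq_add_two_eq_iff (hz 2), h3, h2, show altExp 3 1 2 = 1 from rfl]
    field_simp
    ring
  have h5 : clusterSeq (altExp 3 1) u v 5 =
      ((v + 1) ^ 3 + (3 * v + 2) * u ^ 3 + u ^ 6) / (u ^ 3 * v ^ 2) := by
    rw [clusterSeq_add_two_eq_iff (hz 3), h4, h3, show altExp 3 1 3 = 3 from rfl]
    field_simp
    ring
  have h6 : clusterSeq (altExp 3 1) u v 6 = (u ^ 3 + v + 1) / (u * v) := by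
    rw [clusterSeq_add_two_eq_iff (hz 4), h5, h4, show altExp 3 1 4 = 1 from rfl]
    field_simp
    ring
  have h7 : clusterSeq (altExp 3 1) u v 7 = (u ^ 3 + 1) / v := by
    rw [clusterSeq_add_two_eq_iff (hz 5), h6, h5, show altExp 3 1 5 = 3 from rfl]
    field_simp
    ring
  have h8 : clusterSeq (altExp 3 1) u v 8 = u := by
    rw [clusterSeq_add_two_eq_iff (hz 6), h7, h6, show altExp 3 1 6 = 1 from rfl]
    field_simp
    ring
  have h9 : clusterSeq (altExp 3 1) u v 9 = v := by
    rw [clusterSeq_add_two_eq_iff (hz 7), h8, h7, show altExp 3 1 7 = 3 from rfl]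
    field_simp
  exact clusterSeq_periodic ((altExp_periodic 3 1).nat_mul 4) h8 h9

lemma clusterSeq_periodic_of_mul_le_three {b c : ℕ} (hb : 0 < b) (hc : 0 < c) (h3 : b * c ≤ 3)
    {u v : F} (hz : ∀ n, clusterSeq (altExp b c) u v n ≠ 0) :
    ∃ h, Even h ∧ 0 < h ∧ Function.Periodic (clusterSeq (altExp b c) u v) h := by
  have hb3 : b ≤ 3 := by nlinarith
  have hc3 : c ≤ 3 := by nlinarith
  interval_cases b <;> interval_cases c <;> norm_num at h3
  · exact ⟨10, by decide, by norm_num, (clusterSeq_one_one_periodic u v hz).nat_mul 2⟩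
  · exact ⟨6, by decide, by norm_num, clusterSeq_one_two_periodic u v hz⟩
  · exact ⟨8, by decide, by norm_num, clusterSeq_one_three_periodic u v hz⟩
  · exact ⟨6, by decide, by norm_num, clusterSeq_two_one_periodic u v hz⟩
  · exact ⟨8, by decide, by norm_num, clusterSeq_three_one_periodic u v hz⟩

end FiniteType

lemma AlgebraicIndependent.aeval_ne_zero {ι R A : Type*} [CommRing R] [CommRing A] [Algebra R A]
    {x : ι → A} (hx : AlgebraicIndependent R x) {p : MvPolynomial ι R} (hp : p ≠ 0) :
    MvPolynomial.aeval x p ≠ 0 :=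
  fun h => hp (hx.eq_zero_of_aeval_eq_zero p h)

lemma MvPolynomial.degreeOf_pow_add_pow {σ R : Type*} [CommSemiring R] [NoZeroDivisors R]
    {p q : MvPolynomial σ R} {i : σ} (hp : p ≠ 0) (h : degreeOf i q < degreeOf i p) (k : ℕ) :
    degreeOf i (p ^ k + q ^ k) = k * degreeOf i p := by
  rcases k.eq_zero_or_pos with rfl | hk
  · rw [pow_zero, pow_zero, ← C_1, ← C_add, degreeOf_C, zero_mul]
  · rw [degreeOf_add_eq_of_degreeOf_lt, degreeOf_pow_eq _ _ _ hp]
    rw [degreeOf_pow_eq _ _ _ hp]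
    exact (degreeOf_pow_le i q k).trans_lt (Nat.mul_lt_mul_of_pos_left h hk)

section Polynomial

open MvPolynomial

noncomputable def clusterFrac (e : ℕ → ℕ) :
    ℕ → MvPolynomial (Fin 2) ℚ × MvPolynomial (Fin 2) ℚ
  | 0 => (X 0, 1)
  | 1 => (X 1, 1)
  | n + 2 => (((clusterFrac e (n + 1)).1 ^ e n + (clusterFrac e (n + 1)).2 ^ e n) *
      (clusterFrac e n).2, (clusterFrac e (n + 1)).2 ^ e n * (clusterFrac e n).1)

lemma eval_clusterFrac_pos (e : ℕ → ℕ) (n : ℕ) :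
    0 < eval 1 (clusterFrac e n).1 ∧ 0 < eval 1 (clusterFrac e n).2 := by
  induction n using Nat.twoStepInduction with
  | zero => simp [clusterFrac]
  | one => simp [clusterFrac]
  | more n ih ih' =>
    simp only [clusterFrac, map_mul, map_add, map_pow]
    exact ⟨mul_pos (add_pos (pow_pos ih'.1 _) (pow_pos ih'.2 _)) ih.2,
      mul_pos (pow_pos ih'.2 _) ih.1⟩

lemma clusterFrac_ne_zero (e : ℕ → ℕ) (n : ℕ) :
    (clusterFrac e n).1 ≠ 0 ∧ (clusterFrac e n).2 ≠ 0 := by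
  obtain ⟨h₁, h₂⟩ := eval_clusterFrac_pos e n
  exact ⟨fun h => by simp [h] at h₁, fun h => by simp [h] at h₂⟩

def clusterDegree (e : ℕ → ℕ) : ℕ → ℤ
  | 0 => 0
  | 1 => 1
  | n + 2 => e n * clusterDegree e (n + 1) - clusterDegree e n

lemma degreeOf_clusterFrac (e : ℕ → ℕ) (hpos : ∀ n, 0 < clusterDegree e (n + 1)) (n : ℕ) :
    (degreeOf 1 (clusterFrac e n).1 : ℤ) = degreeOf 1 (clusterFrac e n).2 + clusterDegree e n := by
  induction n using Nat.twoStepInduction with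
  | zero => simp [clusterFrac, clusterDegree, degreeOf_X]
  | one => simp [clusterFrac, clusterDegree]
  | more n ih ih' =>
    obtain ⟨hp, hq⟩ := clusterFrac_ne_zero e n
    obtain ⟨hp', hq'⟩ := clusterFrac_ne_zero e (n + 1)
    have hlt : degreeOf 1 (clusterFrac e (n + 1)).2 < degreeOf 1 (clusterFrac e (n + 1)).1 := by
      have := hpos n
      omega
    have hsum := left_ne_zero_of_mul (clusterFrac_ne_zero e (n + 2)).1
    simp only [clusterFrac] at hsum ⊢
    rw [degreeOf_mul_eq hsum hq, degreeOf_mul_eq (pow_ne_zero _ hq') hp,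
      degreeOf_pow_add_pow hp' hlt, degreeOf_pow_eq _ _ _ hq', clusterDegree]
    push_cast
    linear_combination (e n : ℤ) * ih' - ih

lemma clusterDegree_growth {e : ℕ → ℕ} (he : Function.Periodic e 2)
    (h4 : ∀ n, 4 ≤ e n * e (n + 1)) (n : ℕ) :
    0 ≤ clusterDegree e n ∧ clusterDegree e n + 1 ≤ clusterDegree e (n + 2) := by
  induction n using Nat.twoStepInduction with
  | zero =>
    have : 1 ≤ e 0 := Nat.pos_of_mul_pos_right (by linarith [h4 0] : 0 < e 0 * e 1)
    simp [clusterDegree]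
    exact_mod_cast this
  | one =>
    have : (4 : ℤ) ≤ e 0 * e 1 := by exact_mod_cast h4 0
    simp [clusterDegree]
    linarith
  | more n ih _ =>
    have hstep : clusterDegree e (n + 4) =
        (e n * e (n + 1) - 2) * clusterDegree e (n + 2) - clusterDegree e n := by
      simp only [clusterDegree, he n]
      ring
    have : (4 : ℤ) ≤ e n * e (n + 1) := by exact_mod_cast h4 n
    constructor <;> nlinarith

lemma clusterDegree_pos {e : ℕ → ℕ} (he : Function.Periodic e 2)
    (h4 : ∀ n, 4 ≤ e n * e (n + 1)) : ∀ n, 0 < clusterDegree e (n + 1)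
  | 0 => by simp [clusterDegree]
  | n + 1 => by linarith [clusterDegree_growth he h4 n]

lemma strictMono_clusterDegree_odd {e : ℕ → ℕ} (he : Function.Periodic e 2)
    (h4 : ∀ n, 4 ≤ e n * e (n + 1)) : StrictMono fun m => clusterDegree e (2 * m + 1) :=
  strictMono_nat_of_lt_succ fun m => by
    show clusterDegree e (2 * m + 1) < clusterDegree e (2 * m + 1 + 2)
    linarith [clusterDegree_growth he h4 (2 * m + 1)]

variable [Algebra ℚ F] {x : Fin 2 → F}

lemma clusterSeq_eq_aeval_div (hx : AlgebraicIndependent ℚ x) (e : ℕ → ℕ) (n : ℕ) :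
    clusterSeq e (x 0) (x 1) n = aeval x (clusterFrac e n).1 / aeval x (clusterFrac e n).2 := by
  induction n using Nat.twoStepInduction with
  | zero => simp [clusterFrac]
  | one => simp [clusterFrac]
  | more n ih ih' =>
    have hp := hx.aeval_ne_zero (clusterFrac_ne_zero e n).1
    have hq := hx.aeval_ne_zero (clusterFrac_ne_zero e n).2
    have hq' := hx.aeval_ne_zero (clusterFrac_ne_zero e (n + 1)).2
    rw [clusterSeq_add_two, ih, ih']
    simp only [clusterFrac, map_mul, map_add, map_pow]
    rw [div_pow]
    field_simp

lemma clusterSeq_ne_zero (hx : AlgebraicIndependent ℚ x) (e : ℕ → ℕ) (n : ℕ) :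
    clusterSeq e (x 0) (x 1) n ≠ 0 := by
  rw [clusterSeq_eq_aeval_div hx]
  exact div_ne_zero (hx.aeval_ne_zero (clusterFrac_ne_zero e n).1)
    (hx.aeval_ne_zero (clusterFrac_ne_zero e n).2)

lemma clusterDegree_eq_of_clusterSeq_eq (hx : AlgebraicIndependent ℚ x) {e : ℕ → ℕ}
    (hpos : ∀ n, 0 < clusterDegree e (n + 1)) {m n : ℕ}
    (h : clusterSeq e (x 0) (x 1) m = clusterSeq e (x 0) (x 1) n) :
    clusterDegree e m = clusterDegree e n := by
  obtain ⟨hpm, hqm⟩ := clusterFrac_ne_zero e m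
  obtain ⟨hpn, hqn⟩ := clusterFrac_ne_zero e n
  rw [clusterSeq_eq_aeval_div hx, clusterSeq_eq_aeval_div hx,
    div_eq_div_iff (hx.aeval_ne_zero hqm) (hx.aeval_ne_zero hqn), ← map_mul, ← map_mul] at h
  have hdeg := congrArg (degreeOf 1) (hx h)
  rw [degreeOf_mul_eq hpm hqn, degreeOf_mul_eq hpn hqm] at hdeg
  have := degreeOf_clusterFrac e hpos m
  have := degreeOf_clusterFrac e hpos n
  omega

lemma infinite_range_clusterSeq (hx : AlgebraicIndependent ℚ x) {e : ℕ → ℕ}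
    (he : Function.Periodic e 2) (h4 : ∀ n, 4 ≤ e n * e (n + 1)) :
    (Set.range (clusterSeq e (x 0) (x 1))).Infinite := by
  have hinj : Function.Injective fun m => clusterSeq e (x 0) (x 1) (2 * m + 1) :=
    fun _ _ h => (strictMono_clusterDegree_odd he h4).injective
      (clusterDegree_eq_of_clusterSeq_eq hx (clusterDegree_pos he h4) h)
  exact (Set.infinite_range_of_injective hinj).mono (Set.range_comp_subset_range _ _)

end Polynomial

section Classification

variable [Algebra ℚ F] {x : Fin 2 → F}

lemma finite_seeds_of_mul_le_three (hx : AlgebraicIndependent ℚ x) {b c : ℕ} (hb : 0 < b)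
    (hc : 0 < c) (h3 : b * c ≤ 3) :
    {s | ∃ l : List (Fin 2), seqAct l (![x 0, x 1], !![0, (b : ℤ); -(c : ℤ), 0]) = s}.Finite := by
  have hz := clusterSeq_ne_zero hx (altExp b c)
  obtain ⟨h, hh, h0, hper⟩ := clusterSeq_periodic_of_mul_le_three hb hc h3 hz
  exact finite_seeds_of_periodic b c (x 0) (x 1) hz hh h0 hper

lemma infinite_clusterVariables_of_four_le_mul (hx : AlgebraicIndependent ℚ x) {b c : ℕ}
    (h4 : 4 ≤ b * c) : {y : F | ∃ (l : List (Fin 2)) (i : Fin 2),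
      (seqAct l (![x 0, x 1], !![0, (b : ℤ); -(c : ℤ), 0])).1 i = y}.Infinite :=
  (infinite_range_clusterSeq hx (altExp_periodic b c)
    fun n => altExp_mul_altExp_succ b c n ▸ h4).mono (range_clusterSeq_subset b c _ _)

end Classification

end RankTwo

/-- Rank-2 finite type classification: for `B = !![0,b;-c,0]` with `b, c > 0`, the
mutation class of the seed (the set of seeds of the cluster pattern) is finite if
and only if `bc ≤ 3`, and the set of cluster variables is finite if and only if
`bc ≤ 3`. -/
theorem rank2_finite_type {F : Type*} [Field F] [Algebra ℚ F]
    (x : Fin 2 → F) (hx : AlgebraicIndependent ℚ x)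
    (b c : ℤ) (hb : 0 < b) (hc : 0 < c) :
    ({s | ∃ l : List (Fin 2), seqAct l (x, !![0, b; -c, 0]) = s}.Finite ↔ b * c ≤ 3) ∧
      ({y : F | ∃ (l : List (Fin 2)) (i : Fin 2),
          (seqAct l (x, !![0, b; -c, 0])).1 i = y}.Finite ↔ b * c ≤ 3) := by
  lift b to ℕ using hb.le
  lift c to ℕ using hc.le
  rw [show x = ![x 0, x 1] by ext i; fin_cases i <;> rfl]
  norm_cast at hb hc ⊢
  by_cases h3 : b * c ≤ 3
  · have hseeds := finite_seeds_of_mul_le_three hx hb hc h3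
    exact ⟨iff_of_true hseeds h3,
      iff_of_true (finite_clusterVariables_of_finite_seeds _ hseeds) h3⟩
  · have hvars := infinite_clusterVariables_of_four_le_mul hx (by omega : 4 ≤ b * c)
    exact ⟨iff_of_false (fun hseeds => hvars (finite_clusterVariables_of_finite_seeds _ hseeds)) h3,
      iff_of_false hvars h3⟩
end
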